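/- arXiv:1310.3877 — 3 statements merged into one kernel-verified Lean document; each statement's English description precedes it below -/
import Mathlib

section
/- For every Hermitian unital linear functional τ_i on ℂ⟨x_i⟩ the following three conditions are equivalent: (i) τ_i has finite-dimensional approximants, i.e. for every m ∈ ℕ and δ > 0 there exists N ∈ ℕ with Γ_R(τ_i; N, m, δ) ≠ ∅; (ii) for every m ∈ ℕ and δ > 0 there exists N₀ ∈ ℕ such that Γ_R(τ_i; N, m, δ) ≠ ∅ for all N ≥ N₀; (iii) there exists a sequence Ξ(N), N ∈ ℕ, where each Ξ(N) is an r(i)-tuple of self-adjoint N×N complex matrices with operator norms ≤ R, such that lim_{N→∞} tr_N(p(Ξ(N))) = τ_i(p) for every p ∈ ℂ⟨x_i⟩. -/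
/-!
Orbital free pressure and its Legendre transform (Hiai–Ueda).

Common infrastructure: the free unital complex *-algebra on self-adjoint generators,
matrix microstate sets, the orbital free pressure, the orbital η-entropy, the orbital
free entropy; Lebesgue measure on self-adjoint matrices, the free pressure, free
entropy and η-entropy; Gibbs (micro-)ensembles.

The Haar probability measures `γ_{U(N)}` on the unitary groups are formalized as a
family of left-invariant Borel probability measures (which uniquely determines them).
-/

open MeasureTheory Filter Topology
open scoped BigOperators ENNReal TensorProduct ComplexOrder

noncomputable section

namespace OrbFP

/-- The algebra of `N × N` complex matrices. -/
abbrev Mat (N : ℕ) := Matrix (Fin N) (Fin N) ℂ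

/-- The normalized trace `tr_N`. -/
def trN (N : ℕ) (A : Mat N) : ℂ := A.trace / (N : ℂ)

/-- The (ℓ²-)operator norm of a matrix. -/
def opNorm {N : ℕ} (A : Mat N) : ℝ := ‖Matrix.toEuclideanCLM (𝕜 := ℂ) A‖

/-- The unitary group `U(N)`. -/
abbrev UN (N : ℕ) := Matrix.unitaryGroup (Fin N) ℂ

instance (N : ℕ) : MeasurableSpace (UN N) := borel _
instance (N : ℕ) : BorelSpace (UN N) := ⟨rfl⟩
instance (N : ℕ) : MeasurableSpace (Mat N) := borel _
instance (N : ℕ) : BorelSpace (Mat N) := ⟨rfl⟩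

/-- The free unital complex *-algebra on self-adjoint generators indexed by `X`. -/
abbrev FAlg (X : Type) := FreeAlgebra ℂ X

/-- Coefficient-wise complex conjugation on the free algebra. -/
def conjCoeff {X : Type} (p : FAlg X) : FAlg X :=
  (FreeAlgebra.equivMonoidAlgebraFreeMonoid (R := ℂ) (X := X)).symm
    (MonoidAlgebra.ofCoeff (Finsupp.mapRange (starRingEnd ℂ) (map_zero _)
      (FreeAlgebra.equivMonoidAlgebraFreeMonoid (R := ℂ) (X := X) p).coeff))

/-- The star operation of the free complex *-algebra with self-adjoint generators:
reverse words (the `star` of `FreeAlgebra`) and conjugate the coefficients. -/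
def fstar {X : Type} (p : FAlg X) : FAlg X := star (conjCoeff p)

/-- Self-adjointness in the free complex *-algebra. -/
def IsSA {X : Type} (p : FAlg X) : Prop := fstar p = p

/-- A Hermitian unital linear functional. -/
def IsHermState {X : Type} (τ : FAlg X →ₗ[ℂ] ℂ) : Prop :=
  τ 1 = 1 ∧ ∀ p, τ (fstar p) = starRingEnd ℂ (τ p)

/-- Ordered product of a word of matrices. -/
def wordMat {N : ℕ} {κ : Type} (A : κ → Mat N) (w : List κ) : Mat N := (w.map A).prod

/-- Ordered product of a word of generators in the free algebra. -/
def wordAlg {κ : Type} (w : List κ) : FAlg κ := (w.map (FreeAlgebra.ι ℂ)).prod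

/-- The microstate set `Γ_R(τ; N, m, δ)` of a functional on the free algebra on `κ`:
tuples of self-adjoint matrices of operator norm at most `R` whose normalized trace of
every word of length `1 ≤ l ≤ m` is `δ`-close to the corresponding moment of `τ`. -/
def microSet {κ : Type} (R : ℝ) (τ : FAlg κ →ₗ[ℂ] ℂ) (N m : ℕ) (δ : ℝ) :
    Set (κ → Mat N) :=
  {A | (∀ j, (A j).IsHermitian ∧ opNorm (A j) ≤ R) ∧
    ∀ w : List κ, w ≠ [] → w.length ≤ m →
      ‖trN N (wordMat A w) - τ (wordAlg w)‖ < δ}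

/-- `τ` has finite-dimensional approximants. -/
def HasFDA {κ : Type} (R : ℝ) (τ : FAlg κ →ₗ[ℂ] ℂ) : Prop :=
  ∀ (m : ℕ) (δ : ℝ), 0 < δ → ∃ N, (microSet R τ N m δ).Nonempty

variable {ι : Type} [Fintype ι]

/-- The index of the generators `x_{ij}`, `i ∈ ι`, `1 ≤ j ≤ r i`. -/
abbrev gen (r : ι → ℕ) := Σ i : ι, Fin (r i)

/-- Evaluation of the full free algebra at a family of matrix tuples. -/
def evalA {r : ι → ℕ} {N : ℕ} (A : ∀ i, Fin (r i) → Mat N) :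
    FAlg (gen r) →ₐ[ℂ] Mat N :=
  FreeAlgebra.lift ℂ fun p : gen r => A p.1 p.2

/-- The canonical embedding `ℂ⟨x_i⟩ → ℂ⟨x⟩`. -/
def inclAlg (r : ι → ℕ) (i : ι) : FAlg (Fin (r i)) →ₐ[ℂ] FAlg (gen r) :=
  FreeAlgebra.lift ℂ fun j => FreeAlgebra.ι ℂ (⟨i, j⟩ : gen r)

/-- The restriction of a functional on `ℂ⟨x⟩` to `ℂ⟨x_i⟩`. -/
def restr {r : ι → ℕ} (τ : FAlg (gen r) →ₗ[ℂ] ℂ) (i : ι) :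
    FAlg (Fin (r i)) →ₗ[ℂ] ℂ :=
  τ ∘ₗ (inclAlg r i).toLinearMap

/-- The embedding of the free algebra of a sub-system of the variables. -/
def inclSub {r : ι → ℕ} (P : ι → Prop) :
    FAlg (gen fun i : Subtype P => r i.1) →ₐ[ℂ] FAlg (gen r) :=
  FreeAlgebra.lift ℂ fun p => FreeAlgebra.ι ℂ (⟨p.1.1, p.2⟩ : gen r)

/-- Restriction of a functional to a sub-system of the variables. -/
def restrSub {r : ι → ℕ} (P : ι → Prop) (τ : FAlg (gen r) →ₗ[ℂ] ℂ) :
    FAlg (gen fun i : Subtype P => r i.1) →ₗ[ℂ] ℂ :=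
  τ ∘ₗ (inclSub P).toLinearMap

/-- The conjugated family `(V_i A_i V_i^*)_i`. -/
def conjFam {r : ι → ℕ} {N : ℕ} (V : ι → UN N) (A : ∀ i, Fin (r i) → Mat N) :
    ∀ i, Fin (r i) → Mat N :=
  fun i j => (V i : Mat N) * A i j * star (V i : Mat N)

/-- The Gibbs weight `exp(-N² tr_N(h((V_i A_i V_i^*)_i)))`. -/
def gibbsWt {r : ι → ℕ} {N : ℕ} (h : FAlg (gen r)) (A : ∀ i, Fin (r i) → Mat N)
    (V : ι → UN N) : ℝ :=
  Real.exp (-(N : ℝ) ^ 2 * (trN N (evalA (conjFam V A) h)).re)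

/-- The product `∏_i Γ_R(τ_i; N, m, δ)` of the microstate sets. -/
def microProd (R : ℝ) {r : ι → ℕ} (τs : ∀ i, FAlg (Fin (r i)) →ₗ[ℂ] ℂ)
    (N m : ℕ) (δ : ℝ) : Set (∀ i, Fin (r i) → Mat N) :=
  {A | ∀ i, A i ∈ microSet R (τs i) N m δ}

/-- The finite-`N` orbital free pressure `π_{orb,R}(h : (τ_i); N, m, δ)`
(`-∞` when some microstate set is empty). -/
def piOrbN (γ : ∀ N, Measure (UN N)) (R : ℝ) {r : ι → ℕ} (h : FAlg (gen r))
    (τs : ∀ i, FAlg (Fin (r i)) →ₗ[ℂ] ℂ) (N m : ℕ) (δ : ℝ) : EReal :=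
  ⨆ A ∈ microProd R τs N m δ,
    ((Real.log (∫ V : ι → UN N, gibbsWt h A V ∂(Measure.pi fun _ => γ N)) : ℝ) : EReal)

/-- The orbital free pressure `π_{orb,R}(h : (τ_i))`. -/
def piOrb (γ : ∀ N, Measure (UN N)) (R : ℝ) {r : ι → ℕ} (h : FAlg (gen r))
    (τs : ∀ i, FAlg (Fin (r i)) →ₗ[ℂ] ℂ) : EReal :=
  ⨅ (m : ℕ) (δ : ℝ) (_ : 0 < δ),
    Filter.limsup
      (fun N : ℕ => ((((N : ℝ) ^ 2)⁻¹ : ℝ) : EReal) * piOrbN γ R h τs N m δ)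
      Filter.atTop

/-- The "universal" `R`-norm `‖h‖_R`: the supremum of the operator norms of all
evaluations of `h` at families of self-adjoint matrices of norm at most `R`. -/
def normR (R : ℝ) {r : ι → ℕ} (h : FAlg (gen r)) : ℝ :=
  sSup {t : ℝ | ∃ (N : ℕ) (A : ∀ i, Fin (r i) → Mat N),
    (∀ i j, (A i j).IsHermitian ∧ opNorm (A i j) ≤ R) ∧ t = opNorm (evalA A h)}

/-- The minus Legendre transform `inf_h (φ(h) + π_{orb,R}(h : (τ_i)))` of the orbital
free pressure, relative to `(τ_i)`. -/
def etaOrbRel (γ : ∀ N, Measure (UN N)) (R : ℝ) {r : ι → ℕ}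
    (τ : FAlg (gen r) →ₗ[ℂ] ℂ) (τs : ∀ i, FAlg (Fin (r i)) →ₗ[ℂ] ℂ) : EReal :=
  ⨅ (h : FAlg (gen r)) (_ : IsSA h),
    (((τ h).re : ℝ) : EReal) + piOrb γ R h τs

/-- The orbital `η`-entropy `η_{orb,R}(τ)`. -/
def etaOrb (γ : ∀ N, Measure (UN N)) (R : ℝ) {r : ι → ℕ}
    (τ : FAlg (gen r) →ₗ[ℂ] ℂ) : EReal :=
  etaOrbRel γ R τ (restr τ)

/-- The microstate set `Γ_R(τ; N, m, δ)` of a functional on the full free algebra. -/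
def microFull (R : ℝ) {r : ι → ℕ} (τ : FAlg (gen r) →ₗ[ℂ] ℂ) (N m : ℕ) (δ : ℝ) :
    Set (∀ i, Fin (r i) → Mat N) :=
  {A | (∀ i j, (A i j).IsHermitian ∧ opNorm (A i j) ≤ R) ∧
    ∀ w : List (gen r), w ≠ [] → w.length ≤ m →
      ‖trN N (wordMat (fun p : gen r => A p.1 p.2) w) - τ (wordAlg w)‖ < δ}

/-- `τ` (on the full algebra) has finite-dimensional approximants. -/
def HasFDAFull (R : ℝ) {r : ι → ℕ} (τ : FAlg (gen r) →ₗ[ℂ] ℂ) : Prop :=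
  ∀ (m : ℕ) (δ : ℝ), 0 < δ → ∃ N, (microFull R τ N m δ).Nonempty

/-- The orbital microstate set `Γ_orb(τ : (A_i); N, m, δ)`. -/
def orbSet (R : ℝ) {r : ι → ℕ} (τ : FAlg (gen r) →ₗ[ℂ] ℂ) {N : ℕ}
    (A : ∀ i, Fin (r i) → Mat N) (m : ℕ) (δ : ℝ) : Set (ι → UN N) :=
  {V | conjFam V A ∈ microFull R τ N m δ}

/-- The orbital free entropy `χ_{orb,R}(τ)`. -/
def chiOrb (γ : ∀ N, Measure (UN N)) (R : ℝ) {r : ι → ℕ}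
    (τ : FAlg (gen r) →ₗ[ℂ] ℂ) : EReal :=
  ⨅ (m : ℕ) (δ : ℝ) (_ : 0 < δ),
    Filter.limsup
      (fun N : ℕ => ((((N : ℝ) ^ 2)⁻¹ : ℝ) : EReal) *
        ⨆ A ∈ microProd R (restr τ) N m δ,
          ENNReal.log ((Measure.pi fun _ : ι => γ N) (orbSet R τ A m δ)))
      Filter.atTop

/-- A tracial `R₀`-state on `ℂ⟨x⟩`. -/
def IsTracialRState {r : ι → ℕ} (R₀ : ℝ) (τ : FAlg (gen r) →ₗ[ℂ] ℂ) : Prop :=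
  IsHermState τ ∧ (∀ p q, τ (p * q) = τ (q * p)) ∧
  (∀ p, 0 ≤ (τ (fstar p * p)).re) ∧
  ∀ (i : ι) (j : Fin (r i)) (k : ℕ) (p : FAlg (gen r)),
    (τ (fstar p * FreeAlgebra.ι ℂ (⟨i, j⟩ : gen r) ^ (2 * k) * p)).re
      ≤ R₀ ^ (2 * k) * (τ (fstar p * p)).re

/-- `τ` is the free product of its restrictions `τ_i`: alternating words in the
`τ`-centered subalgebras `ℂ⟨x_i⟩` have vanishing `τ`-value. -/
def IsFreeProduct {r : ι → ℕ} (τ : FAlg (gen r) →ₗ[ℂ] ℂ) : Prop :=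
  ∀ (k : ℕ), 0 < k → ∀ (idx : Fin k → ι) (p : ∀ l, FAlg (Fin (r (idx l)))),
    (∀ l, τ (inclAlg r (idx l) (p l)) = 0) →
    (∀ (l : Fin k) (hl : (l : ℕ) + 1 < k), idx l ≠ idx ⟨(l : ℕ) + 1, hl⟩) →
    τ ((List.ofFn fun l => inclAlg r (idx l) (p l)).prod) = 0

/-- The partition function `Z_N^{(h, Ξ(N))}` of the orbital Gibbs micro-ensemble. -/
def ZOrbN (γ : ∀ N, Measure (UN N)) {r : ι → ℕ} (h : FAlg (gen r)) {N : ℕ}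
    (A : ∀ i, Fin (r i) → Mat N) : ℝ :=
  ∫ V : ι → UN N, gibbsWt h A V ∂(Measure.pi fun _ => γ N)

/-- The orbital Gibbs micro-ensemble `μ_N^{(h, Ξ(N))}`. -/
def muOrbN (γ : ∀ N, Measure (UN N)) {r : ι → ℕ} (h : FAlg (gen r)) {N : ℕ}
    (A : ∀ i, Fin (r i) → Mat N) : Measure (ι → UN N) :=
  (Measure.pi fun _ => γ N).withDensity
    fun V => ENNReal.ofReal (gibbsWt h A V / ZOrbN γ h A)

/-! ### Lebesgue measure on self-adjoint matrices and one-variable quantities -/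

/-- The parametrization of self-adjoint matrices by the diagonal entries and the real
and imaginary parts of the above-diagonal entries. -/
def matOfCoord (N : ℕ) (f : Fin N × Fin N → ℝ) : Mat N :=
  Matrix.of fun p q =>
    if p = q then (f (p, p) : ℂ)
    else if p < q then (f (p, q) : ℂ) + (f (q, p) : ℂ) * Complex.I
    else (f (q, p) : ℂ) - (f (p, q) : ℂ) * Complex.I

/-- The Lebesgue measure `Λ_N` on self-adjoint `N × N` matrices. -/
def LambdaMat (N : ℕ) : Measure (Mat N) :=
  Measure.map (matOfCoord N) (volume : Measure (Fin N × Fin N → ℝ))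

/-- The product Lebesgue measure `Λ_N^{⊗n}` on `n`-tuples of self-adjoint matrices. -/
def LambdaPow (n N : ℕ) : Measure (Fin n → Mat N) :=
  Measure.map (fun f i => matOfCoord N (f i))
    (volume : Measure (Fin n → Fin N × Fin N → ℝ))

/-- Evaluation of a polynomial in `n` single variables at an `n`-tuple of matrices. -/
def evalSingle {n : ℕ} {N : ℕ} (A : Fin n → Mat N) :
    FAlg (gen fun _ : Fin n => 1) →ₐ[ℂ] Mat N :=
  evalA fun i (_ : Fin 1) => A i

/-- The set `((M_N(ℂ)^{sa})_R)^n`. -/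
def ballR (n N : ℕ) (R : ℝ) : Set (Fin n → Mat N) :=
  {A | ∀ i, (A i).IsHermitian ∧ opNorm (A i) ≤ R}

/-- The partition function `Z_{R,N}^h`. -/
def ZR (n N : ℕ) (R : ℝ) (h : FAlg (gen fun _ : Fin n => 1)) : ℝ :=
  ∫ A in ballR n N R,
    Real.exp (-(N : ℝ) ^ 2 * (trN N (evalSingle A h)).re) ∂(LambdaPow n N)

/-- The free pressure `π_R(h)`. -/
def piR (n : ℕ) (R : ℝ) (h : FAlg (gen fun _ : Fin n => 1)) : EReal :=
  Filter.limsup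
    (fun N : ℕ => ((((N : ℝ) ^ 2)⁻¹ : ℝ) : EReal) * ((Real.log (ZR n N R h) : ℝ) : EReal)
      + ((((n : ℝ) / 2 * Real.log N) : ℝ) : EReal))
    Filter.atTop

/-- The Gibbs micro-ensemble `λ_{R,N}^h`. -/
def lambdaGibbs (n N : ℕ) (R : ℝ) (h : FAlg (gen fun _ : Fin n => 1)) :
    Measure (Fin n → Mat N) :=
  ((LambdaPow n N).restrict (ballR n N R)).withDensity
    fun A => ENNReal.ofReal
      (Real.exp (-(N : ℝ) ^ 2 * (trN N (evalSingle A h)).re) / ZR n N R h)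

/-- The microstate free entropy `χ_R` of a single-variable functional. -/
def chiR1 (R : ℝ) (τ : FAlg (Fin 1) →ₗ[ℂ] ℂ) : EReal :=
  ⨅ (m : ℕ) (δ : ℝ) (_ : 0 < δ),
    Filter.limsup
      (fun N : ℕ => ((((N : ℝ) ^ 2)⁻¹ : ℝ) : EReal) *
          ENNReal.log (LambdaMat N {B : Mat N | (fun _ : Fin 1 => B) ∈ microSet R τ N m δ})
        + ((((1 : ℝ) / 2 * Real.log N) : ℝ) : EReal))
      Filter.atTop

/-- The microstate free entropy `χ_R` of a functional on `n` single variables. -/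
def chiRn (n : ℕ) (R : ℝ) (σ : FAlg (gen fun _ : Fin n => 1) →ₗ[ℂ] ℂ) : EReal :=
  ⨅ (m : ℕ) (δ : ℝ) (_ : 0 < δ),
    Filter.limsup
      (fun N : ℕ => ((((N : ℝ) ^ 2)⁻¹ : ℝ) : EReal) *
          ENNReal.log (LambdaPow n N
            {A : Fin n → Mat N | (fun i (_ : Fin 1) => A i) ∈ microFull R σ N m δ})
        + ((((n : ℝ) / 2 * Real.log N) : ℝ) : EReal))
      Filter.atTop

/-- The `η`-entropy `η_R(τ)`, the minus Legendre transform of the free pressure. -/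
def etaR (n : ℕ) (R : ℝ) (τ : FAlg (gen fun _ : Fin n => 1) →ₗ[ℂ] ℂ) : EReal :=
  ⨅ (h : FAlg (gen fun _ : Fin n => 1)) (_ : IsSA h),
    (((τ h).re : ℝ) : EReal) + piR n R h

/-! ### The doubled (tensor) orbital free pressure -/

/-- The algebraic tensor product `ℂ⟨x⟩ ⊗ ℂ⟨x⟩`. -/
abbrev TAlg (r : ι → ℕ) := TensorProduct ℂ (FAlg (gen r)) (FAlg (gen r))

/-- The functional `τ ⊗ τ` on `ℂ⟨x⟩ ⊗ ℂ⟨x⟩`. -/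
def tensFun {r : ι → ℕ} (τ : FAlg (gen r) →ₗ[ℂ] ℂ) : TAlg r →ₗ[ℂ] ℂ :=
  (TensorProduct.lid ℂ ℂ).toLinearMap ∘ₗ TensorProduct.map τ τ

/-- The normalized trace as a linear map. -/
def trLin (N : ℕ) : Mat N →ₗ[ℂ] ℂ := (N : ℂ)⁻¹ • Matrix.traceLinearMap (Fin N) ℂ ℂ

/-- The functional `tr_N ⊗ tr_N` on `M_N(ℂ) ⊗ M_N(ℂ)`. -/
def tr2 (N : ℕ) : TensorProduct ℂ (Mat N) (Mat N) →ₗ[ℂ] ℂ :=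
  (TensorProduct.lid ℂ ℂ).toLinearMap ∘ₗ TensorProduct.map (trLin N) (trLin N)

/-- Evaluation of `ℂ⟨x⟩ ⊗ ℂ⟨x⟩` at a family of matrix tuples. -/
def evalT {r : ι → ℕ} {N : ℕ} (A : ∀ i, Fin (r i) → Mat N) :
    TAlg r →ₐ[ℂ] TensorProduct ℂ (Mat N) (Mat N) :=
  Algebra.TensorProduct.map (evalA A) (evalA A)

/-- The finite-`N` doubled orbital free pressure `π^{(2)}_{orb,R}(p : (τ_i); N, m, δ)`. -/
def pi2OrbN (γ : ∀ N, Measure (UN N)) (R : ℝ) {r : ι → ℕ} (p : TAlg r)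
    (τs : ∀ i, FAlg (Fin (r i)) →ₗ[ℂ] ℂ) (N m : ℕ) (δ : ℝ) : EReal :=
  ⨆ A ∈ microProd R τs N m δ,
    ((Real.log (∫ V : ι → UN N,
        Real.exp (-(N : ℝ) ^ 2 * (tr2 N (evalT (conjFam V A) p)).re)
        ∂(Measure.pi fun _ => γ N)) : ℝ) : EReal)

/-- The doubled orbital free pressure `π^{(2)}_{orb,R}(p : (τ_i))`. -/
def pi2Orb (γ : ∀ N, Measure (UN N)) (R : ℝ) {r : ι → ℕ} (p : TAlg r)
    (τs : ∀ i, FAlg (Fin (r i)) →ₗ[ℂ] ℂ) : EReal :=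
  ⨅ (m : ℕ) (δ : ℝ) (_ : 0 < δ),
    Filter.limsup
      (fun N : ℕ => ((((N : ℝ) ^ 2)⁻¹ : ℝ) : EReal) * pi2OrbN γ R p τs N m δ)
      Filter.atTop

/-!
Padding a microstate `A` of size `N₁` to `A ⊕ ⋯ ⊕ A ⊕ 0` of size `N = k N₁ + s`, `s < N₁`,
is a non-unital *-homomorphism, so it keeps self-adjointness and the norm bound and commutes
with words, while it only rescales normalized traces by `k N₁ / N = 1 - s / N`. Hence a
microstate in one dimension yields microstates in all large dimensions. Choosing, for each `N`,
a microstate of the finest level `m ≤ N` available, with accuracy `1 / (m + 1)`, gives a single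
sequence whose word moments converge, and all moments converge since words span `ℂ⟨x_i⟩`.
Conversely, a convergent sequence eventually lies in each microstate set, as there are only
finitely many words of length at most `m`.
-/

-- With this norm `‖A‖` is definitionally `opNorm A`.
open scoped Matrix.Norms.L2Operator

lemma norm_entry_le_norm {N : ℕ} (A : Mat N) (p q : Fin N) : ‖A p q‖ ≤ ‖A‖ := by
  have hcol := A.l2_opNorm_mulVec (EuclideanSpace.single q 1)
  simp only [EuclideanSpace.single, PiLp.norm_single, norm_one, mul_one] at hcol
  simpa using (PiLp.norm_apply_le _ p).trans hcol

lemma norm_trN_le {N : ℕ} (A : Mat N) : ‖trN N A‖ ≤ ‖A‖ := by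
  rcases N.eq_zero_or_pos with rfl | hN
  · simp [trN]
  rw [trN, norm_div, Complex.norm_natCast, div_le_iff₀ (by exact_mod_cast hN)]
  calc ‖A.trace‖ ≤ ∑ p, ‖A p p‖ := norm_sum_le _ _
    _ ≤ ∑ _p : Fin N, ‖A‖ := Finset.sum_le_sum fun p _ => norm_entry_le_norm A p p
    _ = ‖A‖ * N := by simp [mul_comm]

lemma trN_one {N : ℕ} (hN : 0 < N) : trN N 1 = 1 := by
  have : (N : ℂ) ≠ 0 := by exact_mod_cast hN.ne'
  simp [trN, this]

lemma trLin_apply (N : ℕ) (A : Mat N) : trLin N A = trN N A := by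
  simp [trLin, trN, div_eq_inv_mul]

lemma lift_wordAlg {κ : Type} {N : ℕ} (A : κ → Mat N) (w : List κ) :
    FreeAlgebra.lift ℂ A (wordAlg w) = wordMat A w := by
  simp [wordAlg, wordMat, map_list_prod, Function.comp_def]

lemma wordAlg_append {κ : Type} (w w' : List κ) :
    wordAlg (w ++ w') = wordAlg w * wordAlg w' := by
  simp [wordAlg]

lemma span_range_wordAlg {κ : Type} : Submodule.span ℂ (Set.range (wordAlg (κ := κ))) = ⊤ := by
  set S := Submodule.span ℂ (Set.range (wordAlg (κ := κ)))
  have hmul : S * S ≤ S := by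
    rw [Submodule.span_mul_span, Submodule.span_le]
    rintro _ ⟨_, ⟨w, rfl⟩, _, ⟨w', rfl⟩, rfl⟩
    exact Submodule.subset_span ⟨w ++ w', wordAlg_append w w'⟩
  refine Submodule.eq_top_iff'.2 fun p => ?_
  induction p using FreeAlgebra.induction with
  | grade0 c =>
    rw [Algebra.algebraMap_eq_smul_one]
    exact S.smul_mem c (Submodule.subset_span ⟨[], rfl⟩)
  | grade1 x => exact Submodule.subset_span ⟨[x], by simp [wordAlg]⟩
  | mul a b ha hb => exact hmul (Submodule.mul_mem_mul ha hb)
  | add a b ha hb => exact S.add_mem ha hb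

lemma norm_wordMat_le {κ : Type} {N : ℕ} {C : ℝ} (A : κ → Mat N) (hA : ∀ j, ‖A j‖ ≤ C)
    {w : List κ} (hw : w ≠ []) : ‖wordMat A w‖ ≤ C ^ w.length := by
  induction w with
  | nil => exact absurd rfl hw
  | cons a t ih =>
    rcases eq_or_ne t [] with rfl | ht
    · simpa [wordMat] using hA a
    · simp only [wordMat, List.map_cons, List.prod_cons, List.length_cons] at ih ⊢
      calc ‖A a * (t.map A).prod‖ ≤ ‖A a‖ * ‖(t.map A).prod‖ := norm_mul_le _ _
        _ ≤ C * C ^ t.length :=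
          mul_le_mul (hA a) (ih ht) (norm_nonneg _) ((norm_nonneg _).trans (hA a))
        _ = C ^ (t.length + 1) := (pow_succ' C _).symm

lemma wordMat_map {κ : Type} {N₁ N : ℕ} (φ : Mat N₁ →⋆ₙₐ[ℂ] Mat N) (A : κ → Mat N₁)
    {w : List κ} (hw : w ≠ []) : wordMat (fun j => φ (A j)) w = φ (wordMat A w) := by
  induction w with
  | nil => exact absurd rfl hw
  | cons a t ih =>
    rcases eq_or_ne t [] with rfl | ht
    · simp [wordMat]
    · simp only [wordMat, List.map_cons, List.prod_cons] at ih ⊢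
      rw [map_mul, ih ht]

section Padding

variable (N₁ N : ℕ)

def padEquiv : Fin N ≃ (Fin N₁ × Fin (N / N₁)) ⊕ Fin (N % N₁) :=
  (finCongr (Nat.div_add_mod N N₁).symm).trans <| finSumFinEquiv.symm.trans <|
    Equiv.sumCongr finProdFinEquiv.symm (Equiv.refl _)

def padMap : Mat N₁ →⋆ₙₐ[ℂ] Mat N where
  toFun X := (Matrix.fromBlocks (Matrix.blockDiagonal fun _ : Fin (N / N₁) => X) 0 0
      (0 : Matrix (Fin (N % N₁)) (Fin (N % N₁)) ℂ)).submatrix (padEquiv N₁ N) (padEquiv N₁ N)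
  map_add' X Y := by
    ext p q
    simp only [Matrix.submatrix_apply, Matrix.add_apply]
    rcases padEquiv N₁ N p with pa | pa <;> rcases padEquiv N₁ N q with qa | qa <;>
      simp [Matrix.blockDiagonal_apply, ite_add_ite]
  map_zero' := by
    ext p q
    simp only [Matrix.submatrix_apply, Matrix.zero_apply]
    rcases padEquiv N₁ N p with pa | pa <;> rcases padEquiv N₁ N q with qa | qa <;>
      simp [Matrix.blockDiagonal_apply]
  map_smul' c X := by
    ext p q
    simp only [Matrix.submatrix_apply, Matrix.smul_apply]
    rcases padEquiv N₁ N p with pa | pa <;> rcases padEquiv N₁ N q with qa | qa <;>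
      simp [Matrix.blockDiagonal_apply]
  map_mul' X Y := by
    rw [Matrix.submatrix_mul_equiv _ _ _ (padEquiv N₁ N) _, Matrix.fromBlocks_multiply]
    simp [Matrix.blockDiagonal_mul]
  map_star' X := by
    simp only [Matrix.star_eq_conjTranspose, Matrix.conjTranspose_submatrix,
      Matrix.fromBlocks_conjTranspose, Matrix.blockDiagonal_conjTranspose,
      Matrix.conjTranspose_zero]

variable {N₁ N}

lemma trace_padMap (X : Mat N₁) : (padMap N₁ N X).trace = (N / N₁ : ℕ) * X.trace := by
  simp only [padMap, NonUnitalStarAlgHom.coe_mk', NonUnitalAlgHom.coe_mk, Matrix.trace,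
    Matrix.diag_apply, Matrix.submatrix_apply]
  rw [Equiv.sum_comp (padEquiv N₁ N) fun i => Matrix.fromBlocks _ 0 0 0 i i]
  simp [Fintype.sum_sum_type, Fintype.sum_prod_type, Matrix.blockDiagonal_apply_eq,
    Finset.mul_sum]

lemma isHermitian_padMap {X : Mat N₁} (hX : X.IsHermitian) : (padMap N₁ N X).IsHermitian :=
  (map_star (padMap N₁ N) X).symm.trans (congrArg _ hX)

lemma norm_padMap_le (X : Mat N₁) : ‖padMap N₁ N X‖ ≤ ‖X‖ :=
  NonUnitalStarAlgHom.norm_apply_le _ X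

lemma norm_trN_padMap_sub_le (hN : 0 < N) (X : Mat N₁) :
    ‖trN N (padMap N₁ N X) - trN N₁ X‖ ≤ N₁ / N * ‖X‖ := by
  rcases N₁.eq_zero_or_pos with rfl | hN₁
  · simp [trN, trace_padMap]
  have hsplit : (N₁ * (N / N₁ : ℕ) + (N % N₁ : ℕ) : ℂ) = N := by
    exact_mod_cast Nat.div_add_mod N N₁
  have hdiff : trN N (padMap N₁ N X) - trN N₁ X = -((N % N₁ : ℕ) / N : ℂ) * trN N₁ X := by
    have : (N : ℂ) ≠ 0 := by exact_mod_cast hN.ne'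
    have : (N₁ : ℂ) ≠ 0 := by exact_mod_cast hN₁.ne'
    rw [trN, trN, trace_padMap]
    field_simp
    linear_combination X.trace * hsplit
  have hs : ((N % N₁ : ℕ) : ℝ) ≤ N₁ := by exact_mod_cast (Nat.mod_lt N hN₁).le
  rw [hdiff, norm_mul, norm_neg, norm_div, Complex.norm_natCast, Complex.norm_natCast]
  gcongr
  exact norm_trN_le X

end Padding

lemma tendsto_apply_of_mem_span {α R M F : Type*} [Semiring R] [AddCommMonoid M] [Module R M]
    [AddCommMonoid F] [Module R F] [TopologicalSpace F] [ContinuousAdd F]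
    [ContinuousConstSMul R F] {l : Filter α} {L : α → M →ₗ[R] F} {L₀ : M →ₗ[R] F} {s : Set M}
    (hs : ∀ x ∈ s, Tendsto (fun a => L a x) l (𝓝 (L₀ x))) {x : M}
    (hx : x ∈ Submodule.span R s) : Tendsto (fun a => L a x) l (𝓝 (L₀ x)) := by
  induction hx using Submodule.span_induction with
  | mem x hx => exact hs x hx
  | zero => simpa using tendsto_const_nhds
  | add x y _ _ hx hy => simpa using hx.add hy
  | smul c x _ hx => simpa using hx.const_smul c

lemma exists_forall_eventually_mem {α : ℕ → Type*} {S : (N : ℕ) → ℕ → Set (α N)}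
    (hS : ∀ N, Antitone (S N)) (h0 : ∀ N, (S N 0).Nonempty)
    (h : ∀ m, ∀ᶠ N in atTop, (S N m).Nonempty) :
    ∃ x : (N : ℕ) → α N, (∀ N, x N ∈ S N 0) ∧ ∀ m, ∀ᶠ N in atTop, x N ∈ S N m := by
  classical
  -- By `h`, the levels `g N` tend to infinity.
  let g N := Nat.findGreatest (fun m => (S N m).Nonempty) N
  have hg : ∀ N, (S N (g N)).Nonempty := fun N =>
    Nat.findGreatest_spec (P := fun m => (S N m).Nonempty) (Nat.zero_le N) (h0 N)
  refine ⟨fun N => (hg N).some, fun N => hS N (Nat.zero_le _) (hg N).some_mem, fun m => ?_⟩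
  filter_upwards [h m, eventually_ge_atTop m] with N hN hmN
  exact hS N (Nat.le_findGreatest hmN hN) (hg N).some_mem

section Microstates

variable {κ : Type} {R : ℝ} {τ : FAlg κ →ₗ[ℂ] ℂ}

lemma microSet_mono {N m m' : ℕ} {δ δ' : ℝ} (hm : m' ≤ m) (hδ : δ ≤ δ') :
    microSet R τ N m δ ⊆ microSet R τ N m' δ' :=
  fun _ ⟨hball, hwords⟩ => ⟨hball, fun w hw hl => (hwords w hw (hl.trans hm)).trans_le hδ⟩

lemma zero_mem_microSet_zero (hR : 0 ≤ R) (N : ℕ) (δ : ℝ) : 0 ∈ microSet R τ N 0 δ :=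
  ⟨fun _ => ⟨Matrix.isHermitian_zero, by simpa [opNorm] using hR⟩,
    fun _ hw hl => absurd (List.length_eq_zero_iff.1 (Nat.le_zero.1 hl)) hw⟩

lemma padMap_mem_microSet {N₁ N m : ℕ} {δ : ℝ} (hN : 0 < N) {A : κ → Mat N₁}
    (hA : A ∈ microSet R τ N₁ m δ) :
    (fun j => padMap N₁ N (A j)) ∈ microSet R τ N m (N₁ / N * max 1 R ^ m + δ) := by
  obtain ⟨hball, hwords⟩ := hA
  refine ⟨fun j => ⟨isHermitian_padMap (hball j).1, (norm_padMap_le _).trans (hball j).2⟩,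
    fun w hw hl => ?_⟩
  have hW : ‖wordMat A w‖ ≤ max 1 R ^ m :=
    (norm_wordMat_le A (fun j => (hball j).2.trans (le_max_right 1 R)) hw).trans
      (pow_le_pow_right₀ (le_max_left 1 R) hl)
  rw [wordMat_map _ _ hw]
  calc ‖trN N (padMap N₁ N (wordMat A w)) - τ (wordAlg w)‖
      ≤ ‖trN N (padMap N₁ N (wordMat A w)) - trN N₁ (wordMat A w)‖
        + ‖trN N₁ (wordMat A w) - τ (wordAlg w)‖ := norm_sub_le_norm_sub_add_norm_sub _ _ _
    _ < N₁ / N * max 1 R ^ m + δ :=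
      add_lt_add_of_le_of_lt ((norm_trN_padMap_sub_le hN _).trans (by gcongr))
        (hwords w hw hl)

lemma HasFDA.eventually_nonempty (hfda : HasFDA R τ) (m : ℕ) {δ : ℝ} (hδ : 0 < δ) :
    ∀ᶠ N in atTop, (microSet R τ N m δ).Nonempty := by
  obtain ⟨N₁, A, hA⟩ := hfda m (δ / 2) (half_pos hδ)
  have hsmall : ∀ᶠ N : ℕ in atTop, (N₁ : ℝ) / N * max 1 R ^ m < δ / 2 := by
    have : Tendsto (fun N : ℕ => (N₁ : ℝ) / N * max 1 R ^ m) atTop (𝓝 0) := by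
      simpa using (tendsto_const_div_atTop_nhds_zero_nat (N₁ : ℝ)).mul_const (max 1 R ^ m)
    exact this.eventually (gt_mem_nhds (half_pos hδ))
  filter_upwards [hsmall, eventually_gt_atTop 0] with N hN hNpos
  exact ⟨_, microSet_mono le_rfl (by linarith) (padMap_mem_microSet hNpos hA)⟩

lemma exists_seq_eventually_mem_microSet (hR : 0 ≤ R)
    (h : ∀ (m : ℕ) (δ : ℝ), 0 < δ → ∀ᶠ N in atTop, (microSet R τ N m δ).Nonempty) :
    ∃ Ξ : (N : ℕ) → κ → Mat N, (∀ N j, (Ξ N j).IsHermitian ∧ opNorm (Ξ N j) ≤ R) ∧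
      ∀ (m : ℕ) (δ : ℝ), 0 < δ → ∀ᶠ N in atTop, Ξ N ∈ microSet R τ N m δ := by
  have hanti : ∀ N, Antitone fun m : ℕ => microSet R τ N m (1 / (m + 1)) := fun N m m' hm =>
    microSet_mono hm (by gcongr)
  obtain ⟨Ξ, hΞ0, hΞ⟩ := exists_forall_eventually_mem hanti
    (fun N => ⟨0, zero_mem_microSet_zero hR N _⟩) (fun m => h m _ Nat.one_div_pos_of_nat)
  refine ⟨Ξ, fun N => (hΞ0 N).1, fun m δ hδ => ?_⟩
  obtain ⟨M, hM⟩ := exists_nat_one_div_lt hδ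
  filter_upwards [hΞ (max m M)] with N hN
  refine microSet_mono (le_max_left m M) (le_of_lt (lt_of_le_of_lt ?_ hM)) hN
  gcongr
  exact le_max_right m M

lemma eventually_mem_microSet_iff [Finite κ] {Ξ : (N : ℕ) → κ → Mat N}
    (hΞ : ∀ N j, (Ξ N j).IsHermitian ∧ opNorm (Ξ N j) ≤ R) :
    (∀ (m : ℕ) (δ : ℝ), 0 < δ → ∀ᶠ N in atTop, Ξ N ∈ microSet R τ N m δ) ↔
      ∀ w : List κ, w ≠ [] →
        Tendsto (fun N => trN N (wordMat (Ξ N) w)) atTop (𝓝 (τ (wordAlg w))) := by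
  constructor
  · intro h w hw
    refine Metric.tendsto_nhds.2 fun ε hε => ?_
    filter_upwards [h w.length ε hε] with N hN
    exact (dist_eq_norm _ _).trans_lt (hN.2 w hw le_rfl)
  · intro h m δ hδ
    have hwords : ∀ᶠ N in atTop, ∀ w ∈ {w : List κ | w.length ≤ m},
        w ≠ [] → ‖trN N (wordMat (Ξ N) w) - τ (wordAlg w)‖ < δ := by
      refine (eventually_all_finite (List.finite_length_le _ m)).2 fun w _ => ?_
      rcases eq_or_ne w [] with rfl | hw
      · exact Eventually.of_forall fun _ h => absurd rfl h
      · filter_upwards [Metric.tendsto_nhds.1 (h w hw) δ hδ] with N hN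
        exact fun _ => (dist_eq_norm _ _).symm.trans_lt hN
    filter_upwards [hwords] with N hN
    exact ⟨hΞ N, fun w hw hl => hN w hl hw⟩

lemma tendsto_trN_lift_of_tendsto_wordMat {Ξ : (N : ℕ) → κ → Mat N} (hτ1 : τ 1 = 1)
    (h : ∀ w : List κ, w ≠ [] →
      Tendsto (fun N => trN N (wordMat (Ξ N) w)) atTop (𝓝 (τ (wordAlg w))))
    (p : FAlg κ) : Tendsto (fun N => trN N (FreeAlgebra.lift ℂ (Ξ N) p)) atTop (𝓝 (τ p)) := by
  have hwords : ∀ q ∈ Set.range wordAlg, Tendsto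
      (fun N => (trLin N ∘ₗ (FreeAlgebra.lift ℂ (Ξ N)).toLinearMap) q) atTop (𝓝 (τ q)) := by
    rintro _ ⟨w, rfl⟩
    simp only [LinearMap.comp_apply, AlgHom.toLinearMap_apply, trLin_apply, lift_wordAlg]
    rcases eq_or_ne w [] with rfl | hw
    · have hone : ∀ᶠ N in atTop, (1 : ℂ) = trN N (wordMat (Ξ N) []) :=
        (eventually_gt_atTop 0).mono fun N hN => (trN_one hN).symm
      simpa [wordAlg, hτ1] using tendsto_const_nhds.congr' hone
    · exact h w hw
  simpa [trLin_apply] using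
    tendsto_apply_of_mem_span hwords (span_range_wordAlg (κ := κ) ▸ Submodule.mem_top)

end Microstates

theorem statement0_general (rr : ℕ) (R : ℝ) (hR : 0 < R)
    (τ : FAlg (Fin rr) →ₗ[ℂ] ℂ) (hτ : IsHermState τ) :
    (HasFDA R τ ↔
      ∀ (m : ℕ) (δ : ℝ), 0 < δ →
        ∃ N₀ : ℕ, ∀ N, N₀ ≤ N → (microSet R τ N m δ).Nonempty) ∧
    (HasFDA R τ ↔
      ∃ Ξ : (N : ℕ) → Fin rr → Mat N,
        (∀ N j, (Ξ N j).IsHermitian ∧ opNorm (Ξ N j) ≤ R) ∧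
        ∀ p : FAlg (Fin rr),
          Filter.Tendsto (fun N => trN N (FreeAlgebra.lift ℂ (Ξ N) p))
            Filter.atTop (nhds (τ p))) := by
  have fda_iff_eventually : HasFDA R τ ↔
      ∀ (m : ℕ) (δ : ℝ), 0 < δ → ∀ᶠ N in atTop, (microSet R τ N m δ).Nonempty :=
    ⟨fun h m _ hδ => h.eventually_nonempty m hδ, fun h m δ hδ => (h m δ hδ).exists⟩
  refine ⟨fda_iff_eventually.trans (by simp only [eventually_atTop]),
    fda_iff_eventually.trans ⟨fun h => ?_, fun ⟨Ξ, hΞ, hlim⟩ m δ hδ => ?_⟩⟩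
  · obtain ⟨Ξ, hΞ, hmem⟩ := exists_seq_eventually_mem_microSet hR.le h
    exact ⟨Ξ, hΞ,
      tendsto_trN_lift_of_tendsto_wordMat hτ.1 ((eventually_mem_microSet_iff hΞ).1 hmem)⟩
  · have hwords : ∀ w : List (Fin rr), w ≠ [] →
        Tendsto (fun N => trN N (wordMat (Ξ N) w)) atTop (𝓝 (τ (wordAlg w))) := fun w _ => by
      simpa only [lift_wordAlg] using hlim (wordAlg w)
    exact ((eventually_mem_microSet_iff hΞ).2 hwords m δ hδ).mono fun N hN => ⟨_, hN⟩

/-- Lemma 2.1: equivalence of the three forms of having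
finite-dimensional approximants. -/
theorem statement0 (rr : ℕ) (hrr : 1 ≤ rr) (R : ℝ) (hR : 0 < R)
    (τ : FAlg (Fin rr) →ₗ[ℂ] ℂ) (hτ : IsHermState τ) :
    (HasFDA R τ ↔
      ∀ (m : ℕ) (δ : ℝ), 0 < δ →
        ∃ N₀ : ℕ, ∀ N, N₀ ≤ N → (microSet R τ N m δ).Nonempty) ∧
    (HasFDA R τ ↔
      ∃ Ξ : (N : ℕ) → Fin rr → Mat N,
        (∀ N j, (Ξ N j).IsHermitian ∧ opNorm (Ξ N j) ≤ R) ∧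
        ∀ p : FAlg (Fin rr),
          Filter.Tendsto (fun N => trN N (FreeAlgebra.lift ℂ (Ξ N) p))
            Filter.atTop (nhds (τ p))) :=
  statement0_general rr R hR τ hτ

end OrbFP

end
end

section
/- Let τ_1, …, τ_n be Hermitian unital linear functionals on ℂ⟨x_1⟩, …, ℂ⟨x_n⟩ respectively, and let τ be a Hermitian unital linear functional on ℂ⟨x⟩ such that the restriction of τ to ℂ⟨x_{i₀}⟩ is different from τ_{i₀} for some 1 ≤ i₀ ≤ n. Then inf over self-adjoint h ∈ ℂ⟨x⟩ of (τ(h) + π_{orb,R}(h : (τ_i)_{i=1}^n)) = −∞. -/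
/-!
Orbital free pressure and its Legendre transform (Hiai–Ueda).

Common infrastructure: the free unital complex *-algebra on self-adjoint generators,
matrix microstate sets, the orbital free pressure, the orbital η-entropy, the orbital
free entropy; Lebesgue measure on self-adjoint matrices, the free pressure, free
entropy and η-entropy; Gibbs (micro-)ensembles.

The Haar probability measures `γ_{U(N)}` on the unitary groups are formalized as a
family of left-invariant Borel probability measures (which uniquely determines them).
-/

open MeasureTheory Filter Topology
open scoped BigOperators ENNReal TensorProduct ComplexOrder

noncomputable section

/-!
Suppose `τ` and `τ_{i₀}` differ on a word `w` in the variables `x_{i₀ j}`, and put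
`a = τ(w) - τ_{i₀}(w)` and `h_t = -t (ā w + a w*)` for `t ≥ 0`. Since `h_t` only involves the
`i₀`-th block, `tr_N(h_t((V_i A_i V_i*)_i)) = tr_N(h_t(A_{i₀}))` does not depend on the
unitaries, so the Gibbs integral is an explicit exponential. On microstates of `τ_{i₀}` with
precision `|a| / 2` this trace is within `t |a|²` of `τ_{i₀}(h_t)`, whence
`τ(h_t) + π_orb(h_t) ≤ τ(h_t) - τ_{i₀}(h_t) + t |a|² = -t |a|²`, which tends to `-∞`.
-/

namespace OrbFP

section StarStructure

variable {X : Type}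

lemma conjCoeff_add (p q : FAlg X) : conjCoeff (p + q) = conjCoeff p + conjCoeff q := by
  simp only [conjCoeff, map_add, MonoidAlgebra.coeff_add,
    Finsupp.mapRange_add (map_add (starRingEnd ℂ)), MonoidAlgebra.ofCoeff_add]

lemma conjCoeff_smul (c : ℂ) (p : FAlg X) :
    conjCoeff (c • p) = starRingEnd ℂ c • conjCoeff p := by
  rw [conjCoeff, conjCoeff, map_smul, MonoidAlgebra.coeff_smul,
    Finsupp.mapRange_smul' c (starRingEnd ℂ c) _ (map_mul (starRingEnd ℂ) c),
    MonoidAlgebra.ofCoeff_smul, map_smul]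

lemma equivMonoidAlgebraFreeMonoid_wordAlg (w : List X) :
    FreeAlgebra.equivMonoidAlgebraFreeMonoid (wordAlg w)
      = MonoidAlgebra.single (FreeMonoid.ofList w) (1 : ℂ) := by
  induction w with
  | nil => simp only [wordAlg, List.map_nil, List.prod_nil, map_one, FreeMonoid.ofList_nil,
      MonoidAlgebra.one_def]
  | cons x w ih =>
    rw [wordAlg, List.map_cons, List.prod_cons, map_mul, ← wordAlg, ih]
    simp [FreeAlgebra.equivMonoidAlgebraFreeMonoid]

lemma conjCoeff_wordAlg (w : List X) : conjCoeff (wordAlg w) = wordAlg w := by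
  rw [conjCoeff, equivMonoidAlgebraFreeMonoid_wordAlg, AlgEquiv.symm_apply_eq,
    equivMonoidAlgebraFreeMonoid_wordAlg]
  simp

lemma star_wordAlg (w : List X) : star (wordAlg w) = wordAlg w.reverse := by
  induction w with
  | nil => simp [wordAlg]
  | cons x w ih =>
    simp only [wordAlg, List.map_cons, List.prod_cons, star_mul, List.reverse_cons,
      List.map_append, List.prod_append] at ih ⊢
    simp [ih]

lemma _root_.FreeAlgebra.star_smul {R Y : Type*} [CommSemiring R] (c : R)
    (p : FreeAlgebra R Y) : star (c • p) = c • star p := by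
  rw [Algebra.smul_def, star_mul, FreeAlgebra.star_algebraMap, ← Algebra.commutes,
    ← Algebra.smul_def]

lemma fstar_add (p q : FAlg X) : fstar (p + q) = fstar p + fstar q := by
  simp only [fstar, conjCoeff_add, star_add]

lemma fstar_smul (c : ℂ) (p : FAlg X) : fstar (c • p) = starRingEnd ℂ c • fstar p := by
  rw [fstar, fstar, conjCoeff_smul, FreeAlgebra.star_smul]

lemma fstar_wordAlg (w : List X) : fstar (wordAlg w) = wordAlg w.reverse := by
  rw [fstar, conjCoeff_wordAlg, star_wordAlg]

end StarStructure

lemma linearMap_ext_wordAlg {X : Type} {M : Type*} [AddCommMonoid M] [Module ℂ M]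
    {f g : FAlg X →ₗ[ℂ] M} (h : ∀ w, f (wordAlg w) = g (wordAlg w)) : f = g := by
  let e := (FreeAlgebra.equivMonoidAlgebraFreeMonoid (R := ℂ) (X := X)).toLinearEquiv
  suffices f ∘ₗ e.symm.toLinearMap = g ∘ₗ e.symm.toLinearMap by
    ext p
    simpa using LinearMap.congr_fun this (e p)
  refine MonoidAlgebra.lhom_ext' fun x => LinearMap.ext_ring ?_
  have hx : e.symm (MonoidAlgebra.single x 1) = wordAlg x.toList := by
    rw [LinearEquiv.symm_apply_eq]
    exact (equivMonoidAlgebraFreeMonoid_wordAlg _).symm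
  simpa [hx] using h x.toList

lemma lift_wordAlg_s6 {X : Type} {A : Type*} [Semiring A] [Algebra ℂ A] (B : X → A) (w : List X) :
    FreeAlgebra.lift ℂ B (wordAlg w) = (w.map B).prod := by
  simp [wordAlg, map_list_prod, Function.comp_def]

def symmWord {X : Type} (c : ℂ) (w : List X) : FAlg X :=
  c • wordAlg w + starRingEnd ℂ c • wordAlg w.reverse

lemma isSA_symmWord {X : Type} (c : ℂ) (w : List X) : IsSA (symmWord c w) := by
  rw [IsSA, symmWord, fstar_add, fstar_smul, fstar_smul, fstar_wordAlg, fstar_wordAlg,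
    List.reverse_reverse, Complex.conj_conj, add_comm]

lemma IsHermState.re_apply_symmWord {X : Type} {τ : FAlg X →ₗ[ℂ] ℂ} (hτ : IsHermState τ)
    (c : ℂ) (w : List X) : (τ (symmWord c w)).re = 2 * (c * τ (wordAlg w)).re := by
  rw [symmWord, map_add, map_smul, map_smul, ← fstar_wordAlg, hτ.2, smul_eq_mul, smul_eq_mul,
    ← map_mul, Complex.add_re, Complex.conj_re]
  ring

lemma trN_add {N : ℕ} (A B : Mat N) : trN N (A + B) = trN N A + trN N B := by
  rw [trN, trN, trN, Matrix.trace_add, add_div]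

lemma trN_smul {N : ℕ} (c : ℂ) (A : Mat N) : trN N (c • A) = c * trN N A := by
  rw [trN, trN, Matrix.trace_smul, smul_eq_mul, mul_div_assoc]

lemma abs_re_trN_lift_symmWord_sub_le {κ : Type} {R : ℝ} {τ : FAlg κ →ₗ[ℂ] ℂ} {N m : ℕ}
    {δ : ℝ} {B : κ → Mat N} (hB : B ∈ microSet R τ N m δ) {w : List κ} (hw : w ≠ [])
    (hwm : w.length ≤ m) (c : ℂ) :
    |(trN N (FreeAlgebra.lift ℂ B (symmWord c w))).re - (τ (symmWord c w)).re| ≤ 2 * ‖c‖ * δ := by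
  set d₁ := trN N (wordMat B w) - τ (wordAlg w)
  set d₂ := trN N (wordMat B w.reverse) - τ (wordAlg w.reverse)
  have hd₁ : ‖d₁‖ < δ := hB.2 w hw hwm
  have hd₂ : ‖d₂‖ < δ := hB.2 w.reverse (List.reverse_ne_nil_iff.mpr hw) (by simpa using hwm)
  have hdiff : trN N (FreeAlgebra.lift ℂ B (symmWord c w)) - τ (symmWord c w)
      = c * d₁ + starRingEnd ℂ c * d₂ := by
    simp only [symmWord, map_add, map_smul, lift_wordAlg_s6, trN_add, trN_smul, wordMat, d₁, d₂,
      smul_eq_mul]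
    ring
  calc |(trN N (FreeAlgebra.lift ℂ B (symmWord c w))).re - (τ (symmWord c w)).re|
      = |(c * d₁ + starRingEnd ℂ c * d₂).re| := by rw [← hdiff, Complex.sub_re]
    _ ≤ ‖c * d₁‖ + ‖starRingEnd ℂ c * d₂‖ := (Complex.abs_re_le_norm _).trans (norm_add_le _ _)
    _ ≤ 2 * ‖c‖ * δ := by
      rw [norm_mul, norm_mul, Complex.norm_conj]
      nlinarith [norm_nonneg c]

section Orbital

variable {ι : Type} {r : ι → ℕ} {N : ℕ}

lemma inclAlg_wordAlg (i : ι) (w : List (Fin (r i))) :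
    inclAlg r i (wordAlg w) = wordAlg (w.map (Sigma.mk i)) := by
  rw [inclAlg, lift_wordAlg_s6]
  simp [wordAlg, Function.comp_def]

lemma inclAlg_symmWord (i : ι) (c : ℂ) (w : List (Fin (r i))) :
    inclAlg r i (symmWord c w) = symmWord c (w.map (Sigma.mk i)) := by
  simp [symmWord, inclAlg_wordAlg, List.map_reverse]

lemma evalA_conjFam_comp_inclAlg (V : ι → UN N) (A : ∀ i, Fin (r i) → Mat N) (i : ι) :
    (evalA (conjFam V A)).comp (inclAlg r i)
      = (Unitary.conjStarAlgAut ℂ (Mat N) (V i)).toAlgEquiv.toAlgHom.comp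
          (FreeAlgebra.lift ℂ (A i)) :=
  FreeAlgebra.hom_ext (funext fun j => by simp [evalA, inclAlg, conjFam])

lemma trN_evalA_conjFam_inclAlg (V : ι → UN N) (A : ∀ i, Fin (r i) → Mat N) (i : ι)
    (p : FAlg (Fin (r i))) :
    trN N (evalA (conjFam V A) (inclAlg r i p)) = trN N (FreeAlgebra.lift ℂ (A i) p) := by
  have h := AlgHom.congr_fun (evalA_conjFam_comp_inclAlg V A i) p
  simp only [AlgHom.comp_apply] at h
  rw [h, trN, trN]
  simp [Matrix.trace_mul_cycle]

variable [Fintype ι] {γ : ∀ N, Measure (UN N)} [∀ N, IsProbabilityMeasure (γ N)] {R : ℝ}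
  {τs : ∀ i, FAlg (Fin (r i)) →ₗ[ℂ] ℂ}

lemma piOrbN_inclAlg (i : ι) (p : FAlg (Fin (r i))) (m : ℕ) (δ : ℝ) :
    piOrbN γ R (inclAlg r i p) τs N m δ
      = ⨆ A ∈ microProd R τs N m δ,
          ((-(N : ℝ) ^ 2 * (trN N (FreeAlgebra.lift ℂ (A i) p)).re : ℝ) : EReal) := by
  simp only [piOrbN, gibbsWt, trN_evalA_conjFam_inclAlg, integral_const, probReal_univ,
    one_smul, Real.log_exp]

lemma piOrb_inclAlg_le {i : ι} {p : FAlg (Fin (r i))} {m : ℕ} {δ : ℝ} (hδ : 0 < δ) {b : ℝ}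
    (hb : ∀ N (B : Fin (r i) → Mat N), B ∈ microSet R (τs i) N m δ →
      b ≤ (trN N (FreeAlgebra.lift ℂ B p)).re) :
    piOrb γ R (inclAlg r i p) τs ≤ ((-b : ℝ) : EReal) := by
  refine (iInf₂_le m δ).trans ((iInf_le _ hδ).trans (limsup_le_of_le (by isBoundedDefault) ?_))
  filter_upwards [eventually_ge_atTop 1] with N hN
  have hN2 : (0 : ℝ) < (N : ℝ) ^ 2 := by positivity
  have hpi : piOrbN γ R (inclAlg r i p) τs N m δ ≤ (((N : ℝ) ^ 2 * -b : ℝ) : EReal) := by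
    rw [piOrbN_inclAlg]
    refine iSup₂_le fun A hA => EReal.coe_le_coe_iff.mpr ?_
    nlinarith [hb N (A i) (hA i)]
  calc ((((N : ℝ) ^ 2)⁻¹ : ℝ) : EReal) * piOrbN γ R (inclAlg r i p) τs N m δ
      ≤ ((((N : ℝ) ^ 2)⁻¹ : ℝ) : EReal) * (((N : ℝ) ^ 2 * -b : ℝ) : EReal) :=
        mul_le_mul_of_nonneg_left hpi (EReal.coe_nonneg.mpr (inv_nonneg.mpr hN2.le))
    _ = ((-b : ℝ) : EReal) := by
        rw [← EReal.coe_mul, inv_mul_cancel_left₀ hN2.ne']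

lemma etaOrbRel_le_neg_mul_sq {τ : FAlg (gen r) →ₗ[ℂ] ℂ} (hτ : IsHermState τ) {i : ι}
    (hτs : IsHermState (τs i)) {w : List (Fin (r i))} (hw : w ≠ [])
    (hne : restr τ i (wordAlg w) ≠ τs i (wordAlg w)) {t : ℝ} (ht : 0 ≤ t) :
    etaOrbRel γ R τ τs
      ≤ ((-t * ‖restr τ i (wordAlg w) - τs i (wordAlg w)‖ ^ 2 : ℝ) : EReal) := by
  set a := restr τ i (wordAlg w) - τs i (wordAlg w)
  have ha : 0 < ‖a‖ := norm_pos_iff.mpr (sub_ne_zero.mpr hne)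
  set c : ℂ := -(t : ℂ) * starRingEnd ℂ a
  have hpi : piOrb γ R (inclAlg r i (symmWord c w)) τs
      ≤ ((-(2 * (c * τs i (wordAlg w)).re - 2 * ‖c‖ * (‖a‖ / 2)) : ℝ) : EReal) := by
    refine piOrb_inclAlg_le (m := w.length) (half_pos ha) fun N B hB => ?_
    have h := abs_re_trN_lift_symmWord_sub_le hB hw le_rfl c
    rw [hτs.re_apply_symmWord] at h
    linarith [(abs_le.mp h).1]
  have hτH : (τ (inclAlg r i (symmWord c w))).re = 2 * (c * restr τ i (wordAlg w)).re := by
    rw [inclAlg_symmWord, hτ.re_apply_symmWord, restr, LinearMap.comp_apply,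
      AlgHom.toLinearMap_apply, inclAlg_wordAlg]
  have hca : (c * a).re = -t * ‖a‖ ^ 2 := by
    rw [mul_assoc, Complex.conj_mul', ← Complex.ofReal_pow, ← Complex.ofReal_neg,
      ← Complex.ofReal_mul, Complex.ofReal_re, neg_mul]
  have hc : ‖c‖ = t * ‖a‖ := by
    simp [c, abs_of_nonneg ht]
  calc etaOrbRel γ R τ τs
      ≤ (((τ (inclAlg r i (symmWord c w))).re : ℝ) : EReal)
          + piOrb γ R (inclAlg r i (symmWord c w)) τs := by
        rw [inclAlg_symmWord]
        exact iInf₂_le _ (isSA_symmWord c _)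
    _ ≤ ((2 * (c * restr τ i (wordAlg w)).re : ℝ) : EReal)
          + ((-(2 * (c * τs i (wordAlg w)).re - 2 * ‖c‖ * (‖a‖ / 2)) : ℝ) : EReal) := by
        rw [hτH]
        exact add_le_add le_rfl hpi
    _ = ((-t * ‖a‖ ^ 2 : ℝ) : EReal) := by
        rw [← EReal.coe_add]
        congr 1
        have : (c * a).re = (c * restr τ i (wordAlg w)).re - (c * τs i (wordAlg w)).re := by
          rw [mul_sub, Complex.sub_re]
        rw [hc]
        linear_combination 2 * hca - 2 * this

end Orbital

theorem statement6_general {n : ℕ} (r : Fin n → ℕ) (R : ℝ)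
    (γ : ∀ N, Measure (UN N)) [∀ N, IsProbabilityMeasure (γ N)]
    (τs : ∀ i, FAlg (Fin (r i)) →ₗ[ℂ] ℂ) (hτs : ∀ i, IsHermState (τs i))
    (τ : FAlg (gen r) →ₗ[ℂ] ℂ) (hτ : IsHermState τ)
    (i₀ : Fin n) (hne : restr τ i₀ ≠ τs i₀) :
    etaOrbRel γ R τ τs = ⊥ := by
  obtain ⟨w, hw⟩ : ∃ w, restr τ i₀ (wordAlg w) ≠ τs i₀ (wordAlg w) := by
    by_contra! h
    exact hne (linearMap_ext_wordAlg h)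
  have hw_ne_nil : w ≠ [] := by
    rintro rfl
    apply hw
    rw [show wordAlg ([] : List (Fin (r i₀))) = 1 from List.prod_nil, (hτs i₀).1, restr,
      LinearMap.comp_apply, AlgHom.toLinearMap_apply, map_one, hτ.1]
  set a := restr τ i₀ (wordAlg w) - τs i₀ (wordAlg w)
  have ha : 0 < ‖a‖ ^ 2 := pow_pos (norm_pos_iff.mpr (sub_ne_zero.mpr hw)) 2
  refine (EReal.eq_bot_iff_forall_lt _).mpr fun y => ?_
  have ht : 0 ≤ (|y| + 1) / ‖a‖ ^ 2 := by positivity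
  refine (etaOrbRel_le_neg_mul_sq hτ (hτs i₀) hw_ne_nil hw ht).trans_lt ?_
  rw [neg_mul, div_mul_cancel₀ _ ha.ne']
  exact_mod_cast (by linarith [neg_abs_le y] : -(|y| + 1) < y)

/-- part of Proposition 3.1: if the restriction of `τ` to some
`ℂ⟨x_{i₀}⟩` differs from `τ_{i₀}`, then the minus Legendre transform of the orbital
free pressure at `τ` relative to `(τ_i)` is `-∞`. -/
theorem statement6 {n : ℕ} (hn : 1 ≤ n) (r : Fin n → ℕ) (hr : ∀ i, 1 ≤ r i) (R : ℝ) (hR : 0 < R)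
    (γ : ∀ N, Measure (UN N)) [∀ N, IsProbabilityMeasure (γ N)]
    (hγ : ∀ N, (γ N).IsMulLeftInvariant)
    (τs : ∀ i, FAlg (Fin (r i)) →ₗ[ℂ] ℂ) (hτs : ∀ i, IsHermState (τs i))
    (τ : FAlg (gen r) →ₗ[ℂ] ℂ) (hτ : IsHermState τ)
    (i₀ : Fin n) (hne : restr τ i₀ ≠ τs i₀) :
    etaOrbRel γ R τ τs = ⊥ :=
  statement6_general r R γ τs hτs τ hτ i₀ hne

end OrbFP

end
end

section
/- Let τ and τ^{(k)}, k ∈ ℕ, be Hermitian unital linear functionals on ℂ⟨x⟩ such that τ^{(k)}(p) → τ(p) as k → ∞ for every p ∈ ℂ⟨x⟩. Then η_{orb,R}(τ) ≥ limsup_{k→∞} η_{orb,R}(τ^{(k)}). -/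
/-!
Orbital free pressure and its Legendre transform (Hiai–Ueda).

Common infrastructure: the free unital complex *-algebra on self-adjoint generators,
matrix microstate sets, the orbital free pressure, the orbital η-entropy, the orbital
free entropy; Lebesgue measure on self-adjoint matrices, the free pressure, free
entropy and η-entropy; Gibbs (micro-)ensembles.

The Haar probability measures `γ_{U(N)}` on the unitary groups are formalized as a
family of left-invariant Borel probability measures (which uniquely determines them).
-/

open MeasureTheory Filter Topology
open scoped BigOperators ENNReal TensorProduct ComplexOrder

noncomputable section

namespace OrbFP

variable {ι : Type} [Fintype ι]

/-!
`η_{orb,R}` is the infimum over self-adjoint `h` of `τ ↦ τ(h) + π_{orb,R}(h : (τ_i))`, so it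
suffices that each of these maps is upper semicontinuous. The first is continuous. For the
second, once the moments of order `≤ m` of `τ'` are `δ/2`-close to those of `τ`, every
microstate in `Γ_R(τ'; N, m, δ/2)` lies in `Γ_R(τ; N, m, δ)`, so the pressure of `τ'` at
tolerance `δ/2` is dominated by that of `τ` at tolerance `δ`.
-/

theorem microSet_subset_of_moments_close {κ : Type} {R : ℝ} {τ τ' : FAlg κ →ₗ[ℂ] ℂ}
    {N m : ℕ} {δ δ' ε : ℝ} (hδ : δ' + ε ≤ δ)
    (hclose : ∀ w : List κ, w.length ≤ m → ‖τ' (wordAlg w) - τ (wordAlg w)‖ ≤ ε) :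
    microSet R τ' N m δ' ⊆ microSet R τ N m δ := by
  rintro A ⟨hA, hmom⟩
  refine ⟨hA, fun w hw hwm => ?_⟩
  calc ‖trN N (wordMat A w) - τ (wordAlg w)‖
      ≤ ‖trN N (wordMat A w) - τ' (wordAlg w)‖ + ‖τ' (wordAlg w) - τ (wordAlg w)‖ :=
        norm_sub_le_norm_sub_add_norm_sub _ _ _
    _ < δ' + ε := add_lt_add_of_lt_of_le (hmom w hw hwm) (hclose w hwm)
    _ ≤ δ := hδ

theorem eventually_moments_close {α : Type*} {l : Filter α} {r : ι → ℕ}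
    {τs : α → ∀ i, FAlg (Fin (r i)) →ₗ[ℂ] ℂ} {σ : ∀ i, FAlg (Fin (r i)) →ₗ[ℂ] ℂ}
    (hconv : ∀ i p, Tendsto (fun a => τs a i p) l (𝓝 (σ i p))) (m : ℕ) {ε : ℝ} (hε : 0 < ε) :
    ∀ᶠ a in l, ∀ i, ∀ w : List (Fin (r i)), w.length ≤ m →
      ‖τs a i (wordAlg w) - σ i (wordAlg w)‖ ≤ ε := by
  refine eventually_all.2 fun i => ?_
  refine (eventually_all_finite (List.finite_length_le _ m)).2 fun w _ => ?_
  simpa only [dist_eq_norm] using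
    (Metric.tendsto_nhds.mp (hconv i (wordAlg w)) ε hε).mono fun _ h => h.le

theorem piOrb_le_limsup_of_microProd_subset (γ : ∀ N, Measure (UN N)) (R : ℝ) {r : ι → ℕ}
    (h : FAlg (gen r)) {τs τs' : ∀ i, FAlg (Fin (r i)) →ₗ[ℂ] ℂ} {m : ℕ} {δ δ' : ℝ}
    (hδ' : 0 < δ') (hsub : ∀ N, microProd R τs' N m δ' ⊆ microProd R τs N m δ) :
    piOrb γ R h τs' ≤
      limsup (fun N : ℕ => ((((N : ℝ) ^ 2)⁻¹ : ℝ) : EReal) * piOrbN γ R h τs N m δ) atTop := by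
  refine (iInf₂_le m δ').trans ((iInf_le _ hδ').trans ?_)
  refine limsup_le_limsup (Eventually.of_forall fun N => ?_)
  exact mul_le_mul_of_nonneg_left (biSup_mono (hsub N)) (EReal.coe_nonneg.2 (by positivity))

theorem limsup_piOrb_le (γ : ∀ N, Measure (UN N)) (R : ℝ) {r : ι → ℕ} (h : FAlg (gen r))
    {τs : ℕ → ∀ i, FAlg (Fin (r i)) →ₗ[ℂ] ℂ} {σ : ∀ i, FAlg (Fin (r i)) →ₗ[ℂ] ℂ}
    (hconv : ∀ i p, Tendsto (fun k => τs k i p) atTop (𝓝 (σ i p))) :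
    limsup (fun k => piOrb γ R h (τs k)) atTop ≤ piOrb γ R h σ := by
  refine le_iInf fun m => le_iInf fun δ => le_iInf fun hδ => ?_
  have hδ2 : 0 < δ / 2 := half_pos hδ
  refine limsup_le_of_le (by isBoundedDefault) ?_
  filter_upwards [eventually_moments_close hconv m hδ2] with k hk
  exact piOrb_le_limsup_of_microProd_subset γ R h hδ2 fun N A hA i =>
    microSet_subset_of_moments_close (by linarith) (hk i) (hA i)

theorem etaOrb_le_add_piOrb (γ : ∀ N, Measure (UN N)) (R : ℝ) {r : ι → ℕ}
    (τ : FAlg (gen r) →ₗ[ℂ] ℂ) {h : FAlg (gen r)} (hh : IsSA h) :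
    etaOrb γ R τ ≤ (((τ h).re : ℝ) : EReal) + piOrb γ R h (restr τ) :=
  iInf₂_le h hh

theorem statement8_general {n : ℕ} (r : Fin n → ℕ) (R : ℝ)
    (γ : ∀ N, Measure (UN N))
    (τ : FAlg (gen r) →ₗ[ℂ] ℂ)
    (τk : ℕ → FAlg (gen r) →ₗ[ℂ] ℂ)
    (hconv : ∀ p : FAlg (gen r),
      Filter.Tendsto (fun k => τk k p) Filter.atTop (nhds (τ p))) :
    Filter.limsup (fun k => etaOrb γ R (τk k)) Filter.atTop ≤ etaOrb γ R τ := by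
  refine le_iInf₂ fun h hh => ?_
  have hre : Tendsto (fun k => (((τk k h).re : ℝ) : EReal)) atTop (𝓝 ((τ h).re : EReal)) :=
    (continuous_coe_real_ereal.tendsto _).comp ((Complex.continuous_re.tendsto _).comp (hconv h))
  calc limsup (fun k => etaOrb γ R (τk k)) atTop
      ≤ limsup (fun k => (((τk k h).re : ℝ) : EReal) + piOrb γ R h (restr (τk k))) atTop :=
        limsup_le_limsup (Eventually.of_forall fun k => etaOrb_le_add_piOrb γ R (τk k) hh)
    _ ≤ limsup (fun k => (((τk k h).re : ℝ) : EReal)) atTop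
          + limsup (fun k => piOrb γ R h (restr (τk k))) atTop :=
        EReal.limsup_add_le (by simp [hre.limsup_eq]) (by simp [hre.limsup_eq])
    _ ≤ (((τ h).re : ℝ) : EReal) + piOrb γ R h (restr τ) := by
        rw [hre.limsup_eq]
        gcongr
        exact limsup_piOrb_le γ R h fun i p => hconv (inclAlg r i p)

/-- Proposition 3.3 (4): upper semicontinuity of the orbital
`η`-entropy in the weak* topology. -/
theorem statement8 {n : ℕ} (hn : 1 ≤ n) (r : Fin n → ℕ) (hr : ∀ i, 1 ≤ r i) (R : ℝ) (hR : 0 < R)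
    (γ : ∀ N, Measure (UN N)) [∀ N, IsProbabilityMeasure (γ N)]
    (hγ : ∀ N, (γ N).IsMulLeftInvariant)
    (τ : FAlg (gen r) →ₗ[ℂ] ℂ) (hτ : IsHermState τ)
    (τk : ℕ → FAlg (gen r) →ₗ[ℂ] ℂ) (hτk : ∀ k, IsHermState (τk k))
    (hconv : ∀ p : FAlg (gen r),
      Filter.Tendsto (fun k => τk k p) Filter.atTop (nhds (τ p))) :
    Filter.limsup (fun k => etaOrb γ R (τk k)) Filter.atTop ≤ etaOrb γ R τ :=
  statement8_general r R γ τ τk hconv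

end OrbFP

end
end
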